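/- Let D be a finite multiset of instance values with P(D) ≥ 1 and N(D) ≥ 1 (the dataset) and let C ⊆ D be a sub-multiset with P(C) ≥ 1 and N(C) ≥ 1 (the cover of a pattern). Then oe(C) = ROCAUC(D) − b_ROCAUC(C) is a tight optimistic estimate for the relative ROC AUC interestingness φ^{rROCAUC}: (i) for every sub-multiset C' ⊆ C with P(C') ≥ 1 and N(C') ≥ 1, ROCAUC(D) − ROCAUC(C') ≤ oe(C); and (ii) there exists a sub-multiset C' ⊆ C with P(C') ≥ 1 and N(C') ≥ 1 such that ROCAUC(D) − ROCAUC(C') = oe(C). -/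

import Mathlib

/-- An instance value: a label (`true` = positive, i.e. `y = 1`;
`false` = negative, i.e. `y = 0`) together with a real prediction score. -/
abbrev Inst : Type := Bool × ℝ

/-- `P C`: the number of positive elements of `C`. -/
def P (C : Multiset Inst) : ℕ := (C.filter (fun c => c.1 = true)).card

/-- `N C`: the number of negative elements of `C`. -/
def N (C : Multiset Inst) : ℕ := (C.filter (fun c => c.1 = false)).card

/-- `TP C t`: the number of positives of `C` with prediction strictly above `t`. -/
noncomputable def TP (C : Multiset Inst) (t : ℝ) : ℕ :=
  (C.filter (fun c => c.1 = true ∧ t < c.2)).card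

/-- `FP C t`: the number of negatives of `C` with prediction strictly above `t`. -/
noncomputable def FP (C : Multiset Inst) (t : ℝ) : ℕ :=
  (C.filter (fun c => c.1 = false ∧ t < c.2)).card

/-- The ROC/PR supporting points `(TP, FP)` of `C`, listed in order of
decreasing threshold, for `t` ranging over the prediction values occurring in
`C` together with `t = -∞` (the latter yielding the final point `(P C, N C)`). -/
noncomputable def supportingPoints (C : Multiset Inst) : List (ℝ × ℝ) :=
  (((C.map Prod.snd).toFinset.sort (· ≤ ·)).reverse.map
    (fun t => ((TP C t : ℝ), (FP C t : ℝ)))) ++ [((P C : ℝ), (N C : ℝ))]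

/-- The trapezoidal sum `Σ_{i=2}^{k} |FP_i − FP_{i−1}| · (TP_i + TP_{i−1})/2`
over a list of `(TP, FP)` points. -/
noncomputable def trapROC : List (ℝ × ℝ) → ℝ
  | [] => 0
  | [_] => 0
  | a :: b :: l => |b.2 - a.2| * (b.1 + a.1) / 2 + trapROC (b :: l)

/-- The area under the ROC curve of `C` (defined whenever `P C ≥ 1` and `N C ≥ 1`). -/
noncomputable def ROCAUC (C : Multiset Inst) : ℝ :=
  trapROC (supportingPoints C) / ((P C : ℝ) * (N C : ℝ))

/-- The trapezoidal sum `Σ_{i=2}^{k} |TP_i − TP_{i−1}| ·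
(TP_i/(TP_i+FP_i) + TP_{i−1}/(TP_{i−1}+FP_{i−1}))/2` over a list of `(TP, FP)`
points; in `ℝ`, division by zero yields `0`, realizing the convention `0/0 = 0`. -/
noncomputable def trapPR : List (ℝ × ℝ) → ℝ
  | [] => 0
  | [_] => 0
  | a :: b :: l =>
      |b.1 - a.1| * (b.1 / (b.1 + b.2) + a.1 / (a.1 + a.2)) / 2 + trapPR (b :: l)

/-- The (linearly interpolated) area under the PR curve of `C`
(defined whenever `P C ≥ 1`). -/
noncomputable def PRAUC (C : Multiset Inst) : ℝ :=
  trapPR (supportingPoints C) / (P C : ℝ)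

open Classical in
/-- The lower bound `b_ROCAUC`: `1` on perfect predictions, `1/2` on perfect
predictions with ties, and `0` otherwise.  (On `Bool`, `false < true`
corresponds to `y < y'` for labels `y, y' ∈ {0, 1}`.) -/
noncomputable def bROCAUC (C : Multiset Inst) : ℝ :=
  if ∀ c ∈ C, ∀ c' ∈ C, (c.1 < c'.1 → c.2 < c'.2) ∧ (c'.1 < c.1 → c'.2 < c.2) then 1
  else if ∀ c ∈ C, ∀ c' ∈ C, (c.1 < c'.1 → c.2 ≤ c'.2) ∧ (c'.1 < c.1 → c'.2 ≤ c.2) then 1/2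
  else 0

/-! The ROC curve gains false positives only at thresholds equal to the score of some negative
`n`, and the trapezoid over such a step has parallel sides `#{positives above n}` and
`#{positives at or above n}`. If every negative scores strictly below (resp. at most) every
positive, both sides (resp. the longer one) equal `P`, so the area is at least `P · N`
(resp. `P · N / 2`), and this passes to every sub-multiset. Conversely a single positive and a
single negative of `C`, chosen according to the case of `b_ROCAUC C`, have ROC AUC exactly
`b_ROCAUC C`. -/

theorem List.SortedGT.isChain_lt_and_le_of_lt {α : Type*} [LinearOrder α] {l : List α}
    (hl : l.SortedGT) : l.IsChain (fun a b => b < a ∧ ∀ s ∈ l, b < s → a ≤ s) := by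
  rw [List.isChain_iff_getElem]
  refine fun i hi => ⟨hl.getElem_lt_getElem_iff.2 (by omega), fun s hs hlt => ?_⟩
  obtain ⟨j, hj, rfl⟩ := List.getElem_of_mem hs
  rw [hl.getElem_lt_getElem_iff] at hlt
  exact hl.getElem_le_getElem_iff.2 (by omega)

theorem le_trapROC_of_isChain (K : ℝ) : ∀ {a : ℝ × ℝ} {l : List (ℝ × ℝ)},
    (a :: l).IsChain (fun a b => a.2 ≤ b.2 ∧ (a.2 < b.2 → 2 * K ≤ a.1 + b.1)) →
    K * (((a :: l).getLast (List.cons_ne_nil a l)).2 - a.2) ≤ trapROC (a :: l)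
  | _, [], _ => by simp [trapROC]
  | a, b :: l, h => by
    rw [List.isChain_cons_cons] at h
    obtain ⟨⟨hmono, hstep⟩, htail⟩ := h
    have ih := le_trapROC_of_isChain K htail
    rw [List.getLast_cons_cons, trapROC]
    have hterm : K * (b.2 - a.2) ≤ |b.2 - a.2| * (b.1 + a.1) / 2 := by
      rcases hmono.lt_or_eq with hlt | heq
      · rw [abs_of_pos (sub_pos.2 hlt)]
        nlinarith [hstep hlt]
      · simp [heq]
    linarith

-- The threshold `⊥` plays the role of `-∞`.
noncomputable def countAbove (C : Multiset Inst) (b : Bool) (t : WithBot ℝ) : ℕ :=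
  (C.filter fun c => c.1 = b ∧ t < (c.2 : WithBot ℝ)).card

noncomputable def rocThresholds (C : Multiset Inst) : List (WithBot ℝ) :=
  ((C.map Prod.snd).toFinset.sort (· ≤ ·)).reverse.map (↑) ++ [⊥]

noncomputable def rocPoint (C : Multiset Inst) (t : WithBot ℝ) : ℝ × ℝ :=
  ((countAbove C true t : ℝ), (countAbove C false t : ℝ))

theorem supportingPoints_eq_map_rocPoint (C : Multiset Inst) :
    supportingPoints C = (rocThresholds C).map (rocPoint C) := by
  simp [supportingPoints, rocThresholds, rocPoint, countAbove, TP, FP, P, N]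

theorem sortedGT_rocThresholds (C : Multiset Inst) : (rocThresholds C).SortedGT := by
  rw [rocThresholds, List.sortedGT_iff_pairwise, List.pairwise_append]
  refine ⟨?_, by simp, by simp [WithBot.bot_lt_coe]⟩
  rw [← List.sortedGT_iff_pairwise]
  exact (WithBot.coe_strictMono.sortedGT_listMap).2 (Finset.sortedLT_sort _).reverse

theorem coe_mem_rocThresholds {C : Multiset Inst} {c : Inst} (hc : c ∈ C) :
    (c.2 : WithBot ℝ) ∈ rocThresholds C := by
  simp only [rocThresholds, List.mem_append, List.mem_map, List.mem_reverse, Finset.mem_sort,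
    Multiset.mem_toFinset, Multiset.mem_map]
  exact Or.inl ⟨c.2, ⟨c, hc, rfl⟩, rfl⟩

theorem countAbove_antitone (C : Multiset Inst) (b : Bool) : Antitone (countAbove C b) :=
  fun _ _ h => Multiset.card_le_card <|
    Multiset.monotone_filter_right _ fun _ hc => ⟨hc.1, h.trans_lt hc.2⟩

theorem countAbove_bot (C : Multiset Inst) (b : Bool) :
    countAbove C b ⊥ = (C.filter fun c => c.1 = b).card := by
  simp [countAbove]

theorem countAbove_eq_zero {C : Multiset Inst} {t : WithBot ℝ}
    (h : ∀ c ∈ C, (c.2 : WithBot ℝ) ≤ t) (b : Bool) : countAbove C b t = 0 :=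
  Multiset.card_eq_zero.2 <| Multiset.filter_eq_nil.2 fun c hc hct => (h c hc).not_gt hct.2

theorem exists_eq_of_countAbove_lt {C : Multiset Inst} {b : Bool} {t t' : WithBot ℝ}
    (ht : t' < t) (hgap : ∀ c ∈ C, t' < (c.2 : WithBot ℝ) → t ≤ c.2)
    (hlt : countAbove C b t < countAbove C b t') :
    ∃ c ∈ C, c.1 = b ∧ (c.2 : WithBot ℝ) = t := by
  by_contra! h
  refine hlt.ne (congrArg Multiset.card (Multiset.filter_congr fun c hc => and_congr_right
    fun hb => ⟨ht.trans, fun hc' => (hgap c hc hc').lt_of_ne' (h c hc hb)⟩))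

theorem le_trapROC_supportingPoints (C : Multiset Inst) (K : ℝ)
    (hK : ∀ n ∈ C, n.1 = false → 2 * K ≤
      (countAbove C true n.2 : ℝ) + ((C.filter fun p => p.1 = true ∧ n.2 ≤ p.2).card : ℝ)) :
    K * N C ≤ trapROC (supportingPoints C) := by
  have hchain : ((rocThresholds C).map (rocPoint C)).IsChain
      fun a b => a.2 ≤ b.2 ∧ (a.2 < b.2 → 2 * K ≤ a.1 + b.1) := by
    rw [List.isChain_map]
    refine (sortedGT_rocThresholds C).isChain_lt_and_le_of_lt.imp fun {t t'} ⟨hlt, hgap⟩ =>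
      ⟨by simp only [rocPoint]; exact_mod_cast countAbove_antitone C false hlt.le,
        fun hFP => ?_⟩
    simp only [rocPoint, Nat.cast_lt] at hFP ⊢
    obtain ⟨n, hn, hnf, rfl⟩ := exists_eq_of_countAbove_lt hlt
      (fun c hc => hgap _ (coe_mem_rocThresholds hc)) hFP
    have hbelow : ((C.filter fun p => p.1 = true ∧ n.2 ≤ p.2).card : ℝ) ≤
        countAbove C true t' :=
      Nat.cast_le.2 <| Multiset.card_le_card <| Multiset.monotone_filter_right _
        fun p hp => ⟨hp.1, hlt.trans_le (WithBot.coe_le_coe.2 hp.2)⟩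
    linarith [hK n hn hnf]
  obtain ⟨t₀, ts, hts⟩ :=
    List.exists_cons_of_ne_nil (by simp [rocThresholds] : rocThresholds C ≠ [])
  have hfirst : countAbove C false t₀ = 0 := by
    have hmax := List.sortedGT_iff_pairwise.1 (sortedGT_rocThresholds C)
    rw [hts, List.pairwise_cons] at hmax
    refine countAbove_eq_zero (fun c hc => ?_) false
    have hc := coe_mem_rocThresholds hc
    rw [hts, List.mem_cons] at hc
    exact hc.elim le_of_eq fun h => (hmax.1 _ h).le
  have hlast : ((rocThresholds C).map (rocPoint C)).getLast (by simp [hts]) = rocPoint C ⊥ := by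
    simp [rocThresholds]
  have key := le_trapROC_of_isChain K (a := rocPoint C t₀) (l := ts.map (rocPoint C))
    (by rw [← List.map_cons, ← hts]; exact hchain)
  simp only [← List.map_cons, ← hts, hlast] at key
  rw [supportingPoints_eq_map_rocPoint]
  simpa [rocPoint, hfirst, countAbove_bot, N] using key

theorem card_filter_true_and_eq_P {C : Multiset Inst} {q : Inst → Prop} [DecidablePred q]
    (h : ∀ c ∈ C, c.1 = true → q c) : (C.filter fun c => c.1 = true ∧ q c).card = P C :=
  congrArg Multiset.card (Multiset.filter_congr fun c hc => and_iff_left_of_imp (h c hc))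

def Separated (r : ℝ → ℝ → Prop) (C : Multiset Inst) : Prop :=
  ∀ n ∈ C, ∀ p ∈ C, n.1 = false → p.1 = true → r n.2 p.2

theorem Separated.of_le {r : ℝ → ℝ → Prop} {C C' : Multiset Inst} (h : Separated r C)
    (hC' : C' ≤ C) : Separated r C' :=
  fun n hn p hp => h n (Multiset.mem_of_le hC' hn) p (Multiset.mem_of_le hC' hp)

theorem one_le_ROCAUC {C : Multiset Inst} (hP : 1 ≤ P C) (hN : 1 ≤ N C)
    (h : Separated (· < ·) C) : 1 ≤ ROCAUC C := by
  have hbound := le_trapROC_supportingPoints C (P C) fun n hn hnf => by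
    rw [countAbove, card_filter_true_and_eq_P fun p hp hpt =>
        WithBot.coe_lt_coe.2 (h n hn p hp hnf hpt),
      card_filter_true_and_eq_P fun p hp hpt => (h n hn p hp hnf hpt).le]
    linarith
  have : (0 : ℝ) < P C * N C := by positivity
  rw [ROCAUC, le_div_iff₀ this]
  linarith

theorem half_le_ROCAUC {C : Multiset Inst} (hP : 1 ≤ P C) (hN : 1 ≤ N C)
    (h : Separated (· ≤ ·) C) : 1 / 2 ≤ ROCAUC C := by
  have hbound := le_trapROC_supportingPoints C (P C / 2) fun n hn hnf => by
    rw [card_filter_true_and_eq_P fun p hp hpt => h n hn p hp hnf hpt]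
    linarith [(countAbove C true n.2).cast_nonneg (α := ℝ)]
  have : (0 : ℝ) < P C * N C := by positivity
  rw [ROCAUC, le_div_iff₀ this]
  linarith

theorem ROCAUC_nonneg (C : Multiset Inst) : 0 ≤ ROCAUC C := by
  have hbound := le_trapROC_supportingPoints C 0 fun n _ _ => by rw [mul_zero]; positivity
  exact div_nonneg (by simpa using hbound) (by positivity)

theorem forall_pairs_iff_separated (r : ℝ → ℝ → Prop) (C : Multiset Inst) :
    (∀ c ∈ C, ∀ c' ∈ C, (c.1 < c'.1 → r c.2 c'.2) ∧ (c'.1 < c.1 → r c'.2 c.2)) ↔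
      Separated r C := by
  refine ⟨fun h n hn p hp hnf hpt => (h n hn p hp).1 (by simp [hnf, hpt]),
    fun h c hc c' hc' => ⟨fun hlt => ?_, fun hlt => ?_⟩⟩
  · exact h c hc c' hc' (Bool.lt_iff.1 hlt).1 (Bool.lt_iff.1 hlt).2
  · exact h c' hc' c hc (Bool.lt_iff.1 hlt).1 (Bool.lt_iff.1 hlt).2

open Classical in
theorem bROCAUC_eq (C : Multiset Inst) :
    bROCAUC C =
      if Separated (· < ·) C then 1 else if Separated (· ≤ ·) C then 1 / 2 else 0 := by
  simp only [bROCAUC, forall_pairs_iff_separated (· < ·), forall_pairs_iff_separated (· ≤ ·)]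

theorem bROCAUC_le_ROCAUC_of_le {C C' : Multiset Inst} (hC' : C' ≤ C) (hP : 1 ≤ P C')
    (hN : 1 ≤ N C') : bROCAUC C ≤ ROCAUC C' := by
  rw [bROCAUC_eq]
  split_ifs with hlt hle
  · exact one_le_ROCAUC hP hN (hlt.of_le hC')
  · exact half_le_ROCAUC hP hN (hle.of_le hC')
  · exact ROCAUC_nonneg C'

theorem P_pair (a b : ℝ) : P {(true, a), (false, b)} = 1 := by simp [P, Multiset.filter_singleton]

theorem N_pair (a b : ℝ) : N {(true, a), (false, b)} = 1 := by simp [N, Multiset.filter_singleton]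

theorem ROCAUC_pair (a b : ℝ) :
    ROCAUC {(true, a), (false, b)} = if b < a then 1 else if b = a then 1 / 2 else 0 := by
  rcases lt_trichotomy b a with h | rfl | h
  · have hsort : ({a, b} : Finset ℝ).sort (· ≤ ·) = [b, a] := by
      rw [Finset.pair_comm, Finset.sort_insert _ (by simpa using h.le) (by simpa using h.ne)]
      simp
    simp [ROCAUC, supportingPoints, hsort, TP, FP, P, N, trapROC, Multiset.filter_singleton, h,
      h.not_gt]
  · simp [ROCAUC, supportingPoints, TP, FP, P, N, trapROC, Multiset.filter_singleton]
  · have hsort : ({a, b} : Finset ℝ).sort (· ≤ ·) = [a, b] := by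
      rw [Finset.sort_insert _ (by simpa using h.le) (by simpa using h.ne)]
      simp
    simp [ROCAUC, supportingPoints, hsort, TP, FP, P, N, trapROC, Multiset.filter_singleton, h,
      h.ne', h.not_gt]

theorem pair_le_of_mem {C : Multiset Inst} {p n : Inst} (hp : p ∈ C) (hn : n ∈ C)
    (hpt : p.1 = true) (hnf : n.1 = false) :
    ({(true, p.2), (false, n.2)} : Multiset Inst) ≤ C := by
  obtain ⟨_, x⟩ := p
  obtain ⟨_, y⟩ := n
  subst hpt hnf
  exact (Multiset.cons_le_of_notMem (by simp)).2 ⟨hp, Multiset.singleton_le.2 hn⟩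

theorem exists_le_ROCAUC_eq_bROCAUC {C : Multiset Inst} (hP : 1 ≤ P C) (hN : 1 ≤ N C) :
    ∃ C' ≤ C, P C' = 1 ∧ N C' = 1 ∧ ROCAUC C' = bROCAUC C := by
  suffices ∃ p ∈ C, ∃ n ∈ C, p.1 = true ∧ n.1 = false ∧
      ROCAUC {(true, p.2), (false, n.2)} = bROCAUC C by
    obtain ⟨p, hp, n, hn, hpt, hnf, h⟩ := this
    exact ⟨_, pair_le_of_mem hp hn hpt hnf, P_pair _ _, N_pair _ _, h⟩
  rw [bROCAUC_eq]
  split_ifs with hlt hle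
  · obtain ⟨p, hp⟩ := Multiset.card_pos_iff_exists_mem.1 hP
    obtain ⟨n, hn⟩ := Multiset.card_pos_iff_exists_mem.1 hN
    rw [Multiset.mem_filter] at hp hn
    exact ⟨p, hp.1, n, hn.1, hp.2, hn.2,
      by rw [ROCAUC_pair, if_pos (hlt n hn.1 p hp.1 hn.2 hp.2)]⟩
  · simp only [Separated, not_forall, not_lt] at hlt
    obtain ⟨n, hn, p, hp, hnf, hpt, hpn⟩ := hlt
    have hnp := le_antisymm (hle n hn p hp hnf hpt) hpn
    exact ⟨p, hp, n, hn, hpt, hnf, by rw [ROCAUC_pair, if_neg hnp.not_lt, if_pos hnp]⟩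
  · simp only [Separated, not_forall, not_le] at hle
    obtain ⟨n, hn, p, hp, hnf, hpt, hpn⟩ := hle
    exact ⟨p, hp, n, hn, hpt, hnf, by rw [ROCAUC_pair, if_neg hpn.not_gt, if_neg hpn.ne']⟩

theorem bROCAUC_tight_optimistic_estimate_general (D C : Multiset Inst)
    (hPC : 1 ≤ P C) (hNC : 1 ≤ N C) :
    (∀ C' ≤ C, 1 ≤ P C' → 1 ≤ N C' →
      ROCAUC D - ROCAUC C' ≤ ROCAUC D - bROCAUC C) ∧
    (∃ C' ≤ C, 1 ≤ P C' ∧ 1 ≤ N C' ∧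
      ROCAUC D - ROCAUC C' = ROCAUC D - bROCAUC C) := by
  refine ⟨fun C' hC' hP hN => sub_le_sub_left (bROCAUC_le_ROCAUC_of_le hC' hP hN) _, ?_⟩
  obtain ⟨C', hC', hP, hN, h⟩ := exists_le_ROCAUC_eq_bROCAUC hPC hNC
  exact ⟨C', hC', hP.ge, hN.ge, by rw [h]⟩

/-- For a dataset `D` and a cover `C ⊆ D` (each containing at
least one positive and one negative), `oe(C) = ROCAUC D − b_ROCAUC C` is a
tight optimistic estimate for the relative ROC AUC interestingness
`φ^{rROCAUC}(C') = ROCAUC D − ROCAUC C'`. -/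
theorem bROCAUC_tight_optimistic_estimate (D C : Multiset Inst)
    (hPD : 1 ≤ P D) (hND : 1 ≤ N D) (hsub : C ≤ D)
    (hPC : 1 ≤ P C) (hNC : 1 ≤ N C) :
    (∀ C' ≤ C, 1 ≤ P C' → 1 ≤ N C' →
      ROCAUC D - ROCAUC C' ≤ ROCAUC D - bROCAUC C) ∧
    (∃ C' ≤ C, 1 ≤ P C' ∧ 1 ≤ N C' ∧
      ROCAUC D - ROCAUC C' = ROCAUC D - bROCAUC C) :=
  bROCAUC_tight_optimistic_estimate_general D C hPC hNC
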